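/- Let G be an undirected graph and let H be the undirected graph obtained from G by adding two new nodes s and t that are each adjacent to every node of V(G). Then a subset S ⊆ V(G) is a vertex cover of G if and only if H \ S contains no odd-length s–t path. -/

import Mathlib

/-!
If `S` misses an edge `uv` of `G`, then `s, u, v, t` is an odd `s – t` path
avoiding `S`. Conversely, an `s – t` path whose second edge is not an edge of `G` must go
straight to `t` (it cannot return to `s`), so it is `s, u, t` and has even length; hence
every odd `s – t` path contains both ends of an edge of `G`, one of which lies in a cover.
-/

/-- The undirected graph `H` obtained from `G` by adding two new vertices
`s = Sum.inr false` and `t = Sum.inr true`, each adjacent to every vertex of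
`G` (but not to each other). -/
def starred {V : Type*} (G : SimpleGraph V) : SimpleGraph (V ⊕ Bool) :=
  SimpleGraph.fromRel (fun a b =>
    match a, b with
    | Sum.inl u, Sum.inl v => G.Adj u v
    | Sum.inl _, Sum.inr _ => True
    | _, _ => False)

namespace starred

open SimpleGraph Sum

variable {V : Type*} {G : SimpleGraph V}

@[simp]
theorem adj_inl_inl {u v : V} : (starred G).Adj (inl u) (inl v) ↔ G.Adj u v := by
  simp only [starred, fromRel_adj, ne_eq, inl.injEq]
  exact ⟨fun ⟨_, h⟩ => h.elim id G.adj_symm, fun h => ⟨h.ne, .inl h⟩⟩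

@[simp]
theorem adj_inl_inr {u : V} {b : Bool} : (starred G).Adj (inl u) (inr b) := by
  simp [starred]

@[simp]
theorem adj_inr_inl {u : V} {b : Bool} : (starred G).Adj (inr b) (inl u) :=
  adj_inl_inr.symm

@[simp]
theorem not_adj_inr_inr {b c : Bool} : ¬(starred G).Adj (inr b) (inr c) := by
  simp [starred]

theorem exists_adj_mem_support_of_isPath {p : (starred G).Walk (inr false) (inr true)}
    (hp : p.IsPath) (hlen : p.length ≠ 2) :
    ∃ u v, G.Adj u v ∧ inl u ∈ p.support ∧ inl v ∈ p.support := by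
  cases p with | @cons _ x _ hsx q => ?_
  cases x with
  | inr => exact absurd hsx not_adj_inr_inr
  | inl u =>
    cases q with | @cons _ y _ hxy r => ?_
    cases y with
    | inl v => exact ⟨u, v, adj_inl_inl.mp hxy, by simp, by simp⟩
    | inr b =>
      cases b with
      | false => exact absurd (by simp) (Walk.cons_isPath_iff _ _ |>.mp hp).2
      | true =>
        have hr : r.Nil := Walk.isPath_iff_nil.mp hp.of_cons.of_cons
        simp [hr.eq_nil] at hlen

theorem exists_isPath_of_adj {u v : V} (huv : G.Adj u v) :
    ∃ p : (starred G).Walk (inr false) (inr true),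
      p.IsPath ∧ p.length = 3 ∧ p.support = [inr false, inl u, inl v, inr true] := by
  refine ⟨.cons adj_inr_inl (.cons (adj_inl_inl.mpr huv) (.cons adj_inl_inr .nil)), ?_, rfl, rfl⟩
  simp [Walk.isPath_def, huv.ne]

end starred

/-- **(Reduction from Vertex Cover, undirected version.)**
`S ⊆ V(G)` is a vertex cover of `G` iff `H \ S` contains no odd-length
`s – t` path, i.e. iff every odd-length `s – t` path of `H` passes through a
vertex of `S`. -/
theorem vertex_cover_iff_no_odd_st_path {V : Type*} (G : SimpleGraph V)
    (S : Set V) :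
    (∀ u v, G.Adj u v → u ∈ S ∨ v ∈ S) ↔
    ∀ p : (starred G).Walk (Sum.inr false) (Sum.inr true),
      p.IsPath → Odd p.length → ∃ u ∈ S, Sum.inl u ∈ p.support := by
  constructor
  · intro hcover p hp hodd
    have hlen : p.length ≠ 2 := fun h => by rw [h] at hodd; exact absurd hodd (by decide)
    obtain ⟨u, v, huv, hu, hv⟩ := starred.exists_adj_mem_support_of_isPath hp hlen
    exact (hcover u v huv).elim (fun h => ⟨u, h, hu⟩) (fun h => ⟨v, h, hv⟩)
  · intro hpaths u v huv
    obtain ⟨p, hp, hlen, hsupp⟩ := starred.exists_isPath_of_adj huv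
    obtain ⟨w, hw, hmem⟩ := hpaths p hp (by rw [hlen]; decide)
    simp only [hsupp, List.mem_cons, reduceCtorEq, Sum.inl.injEq, List.not_mem_nil,
      or_false, false_or] at hmem
    rcases hmem with rfl | rfl
    exacts [.inl hw, .inr hw]
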